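/- Equal dimension of spectral subspaces: Let A(s) = A₀s² + (A₁+A₁*)s + A₂ be a self-adjoint quadratic matrix polynomial of n×n matrices with A₀ positive definite and A(s) positive definite for every real s. Let N be the Stroh companion matrix of A. Then N has no real eigenvalues, and the sum of generalized eigenspaces of N for eigenvalues with positive imaginary part has dimension exactly n (and likewise for negative imaginary part). -/

import Mathlib

/-!
An eigenvector `(x, y)` of the Stroh matrix `N` for the eigenvalue `s` has `A(s) x = 0` and
`y = (A₁ + s A₀) x`, so `N` has no real eigenvalue as `A(t)` is invertible for real `t`.
Since `Nᴴ = T N T` with `T` the block swap, the characteristic polynomial of `N` has real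
coefficients; its `2n` roots avoid the real line and are closed under conjugation with
multiplicities, so exactly `n` of them lie in each open half-plane. The dimension of a sum of
generalized eigenspaces is the number of roots, counted with multiplicity, that it collects.
-/

open Matrix Module Polynomial
open scoped ComplexOrder

theorem iSupIndep.finrank_finset_sup {K V ι : Type*} [DivisionRing K] [AddCommGroup V]
    [Module K V] [FiniteDimensional K V] {t : ι → Submodule K V} (ht : iSupIndep t)
    (F : Finset ι) : finrank K ↥(F.sup t) = ∑ i ∈ F, finrank K ↥(t i) := by
  classical
  induction F using Finset.induction_on with
  | empty => simp
  | @insert a F ha ih =>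
    have hdisj : Disjoint (t a) (F.sup t) := by
      simpa [Finset.sup_eq_iSup] using ht.disjoint_biSup (y := (F : Set ι)) (by simpa using ha)
    rw [Finset.sup_insert, Finset.sum_insert ha, ← ih, ← Submodule.finrank_sup_add_finrank_inf_eq,
      disjoint_iff.mp hdisj, finrank_bot, add_zero]

namespace Module.End

variable {K V : Type*} [Field K] [AddCommGroup V] [Module K V] [FiniteDimensional K V]

theorem maxGenEigenspace_eq_bot_of_not_isRoot_charpoly (f : End K V) {μ : K}
    (hμ : ¬f.charpoly.IsRoot μ) : f.maxGenEigenspace μ = ⊥ := by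
  rw [← Submodule.finrank_eq_zero, LinearMap.finrank_maxGenEigenspace_eq]
  exact rootMultiplicity_eq_zero hμ

theorem finrank_biSup_maxGenEigenspace (f : End K V) (s : Set K) [DecidablePred (· ∈ s)] :
    finrank K ↥(⨆ μ ∈ s, f.maxGenEigenspace μ) =
      Multiset.card (f.charpoly.roots.filter (· ∈ s)) := by
  classical
  set R := f.charpoly.roots.toFinset.filter (· ∈ s)
  have hsup : ⨆ μ ∈ s, f.maxGenEigenspace μ = R.sup f.maxGenEigenspace := by
    refine le_antisymm (iSup₂_le fun μ hμ => ?_) (Finset.sup_le fun μ hμ => ?_)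
    · by_cases hroot : f.charpoly.IsRoot μ
      · exact Finset.le_sup (Finset.mem_filter.mpr
          ⟨Multiset.mem_toFinset.mpr ((mem_roots f.charpoly_monic.ne_zero).mpr hroot), hμ⟩)
      · rw [f.maxGenEigenspace_eq_bot_of_not_isRoot_charpoly hroot]
        exact bot_le
    · exact le_iSup₂_of_le μ (Finset.mem_filter.mp hμ).2 le_rfl
  rw [hsup, f.independent_maxGenEigenspace.finrank_finset_sup, ← Multiset.toFinset_sum_count_eq,
    Multiset.toFinset_filter]
  refine Finset.sum_congr rfl fun μ hμ => ?_
  rw [LinearMap.finrank_maxGenEigenspace_eq, ← count_roots,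
    Multiset.count_filter_of_pos (Finset.mem_filter.mp hμ).2]

end Module.End

namespace Polynomial

theorem roots_map_conj_of_map_conj_eq {p : ℂ[X]} (hp : p.map (starRingEnd ℂ) = p) :
    p.roots.map (starRingEnd ℂ) = p.roots := by
  conv_rhs => rw [← hp]
  exact roots_map_of_injective_of_card_eq_natDegree (RingHom.injective _)
    IsAlgClosed.card_roots_eq_natDegree

theorem card_roots_filter_im_neg_eq_im_pos {p : ℂ[X]} (hp : p.map (starRingEnd ℂ) = p) :
    Multiset.card (p.roots.filter (·.im < 0)) = Multiset.card (p.roots.filter (0 < ·.im)) := by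
  conv_lhs => rw [← roots_map_conj_of_map_conj_eq hp, Multiset.filter_map, Multiset.card_map]
  simp only [Function.comp_def, Complex.conj_im, neg_neg_iff_pos]

theorem card_roots_filter_im_pos_add_im_neg {p : ℂ[X]} (hp : ∀ t : ℝ, ¬p.IsRoot t) :
    Multiset.card (p.roots.filter (0 < ·.im)) + Multiset.card (p.roots.filter (·.im < 0)) =
      p.natDegree := by
  rw [← IsAlgClosed.card_roots_eq_natDegree, ← Multiset.card_add]
  conv_rhs => rw [← Multiset.filter_add_not (0 < ·.im) p.roots]
  congr 2
  refine Multiset.filter_congr fun μ hμ => ?_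
  have him : μ.im ≠ 0 := fun h => hp μ.re <| by
    rw [← Complex.re_add_im μ, h] at hμ
    simpa using (mem_roots'.mp hμ).2
  rw [not_lt]
  exact ⟨le_of_lt, (lt_of_le_of_ne · him)⟩

end Polynomial

namespace Matrix

variable {n : Type*} [Fintype n] [DecidableEq n]

theorem charpoly_map_star_of_conjTranspose_mul_eq {R : Type*} [CommRing R] [StarRing R]
    {N P : Matrix n n R} (hP : IsUnit P) (h : Nᴴ * P = P * N) :
    N.charpoly.map (starRingEnd R) = N.charpoly := by
  have hconj : Nᴴ = hP.unit.val * N * hP.unit.val⁻¹ := by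
    rw [IsUnit.unit_spec, ← h, Matrix.mul_assoc,
      mul_nonsing_inv _ ((isUnit_iff_isUnit_det P).mp hP), Matrix.mul_one]
  have hmap : N.map (starRingEnd R) = Nᴴᵀ := by ext; rfl
  rw [← charpoly_map, hmap, charpoly_transpose, hconj, charpoly_units_conj]

theorem isUnit_fromBlocks_zero_one_one_zero {R : Type*} [CommRing R] :
    IsUnit (fromBlocks 0 1 1 0 : Matrix (n ⊕ n) (n ⊕ n) R) := by
  have h : (fromBlocks 0 1 1 0 : Matrix (n ⊕ n) (n ⊕ n) R) * fromBlocks 0 1 1 0 = 1 := by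
    simp [fromBlocks_multiply, fromBlocks_one]
  exact ⟨⟨_, _, h, h⟩, rfl⟩

section CommRing

variable {R : Type*} [CommRing R] [StarRing R]

noncomputable def strohMatrix (A₀ A₁ A₂ : Matrix n n R) : Matrix (n ⊕ n) (n ⊕ n) R :=
  fromBlocks (-(A₀⁻¹ * A₁)) A₀⁻¹ (-A₂ + A₁ᴴ * A₀⁻¹ * A₁) (-(A₁ᴴ * A₀⁻¹))

variable {A₀ A₁ A₂ : Matrix n n R}

theorem strohMatrix_mulVec_eq_smul (hA₀ : IsUnit A₀) {s : R} {x y : n → R}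
    (h : strohMatrix A₀ A₁ A₂ *ᵥ Sum.elim x y = s • Sum.elim x y) :
    y = (A₁ + s • A₀) *ᵥ x ∧ (s ^ 2 • A₀ + s • (A₁ + A₁ᴴ) + A₂) *ᵥ x = 0 := by
  have hdet := (isUnit_iff_isUnit_det A₀).mp hA₀
  rw [strohMatrix, fromBlocks_mulVec] at h
  have h₁ : -(A₀⁻¹ * A₁) *ᵥ x + A₀⁻¹ *ᵥ y = s • x :=
    funext fun i => by simpa using congrFun h (Sum.inl i)
  have h₂ : (-A₂ + A₁ᴴ * A₀⁻¹ * A₁) *ᵥ x + -(A₁ᴴ * A₀⁻¹) *ᵥ y = s • y :=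
    funext fun i => by simpa using congrFun h (Sum.inr i)
  have hy : y = (A₁ + s • A₀) *ᵥ x := by
    have := congrArg (A₀ *ᵥ ·) h₁
    simp only [mulVec_add, mulVec_mulVec, neg_mulVec, mulVec_neg,
      mul_nonsing_inv_cancel_left _ _ hdet, mul_nonsing_inv _ hdet, one_mulVec,
      mulVec_smul] at this
    rw [add_mulVec, smul_mulVec]
    linear_combination (norm := module) this
  refine ⟨hy, ?_⟩
  have hA₁y : (A₁ᴴ * A₀⁻¹) *ᵥ y = (A₁ᴴ * A₀⁻¹ * A₁) *ᵥ x + s • A₁ᴴ *ᵥ x := by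
    rw [hy, add_mulVec, mulVec_add, mulVec_mulVec, smul_mulVec, mulVec_smul, mulVec_mulVec,
      Matrix.mul_assoc _ A₀⁻¹ A₀, nonsing_inv_mul _ hdet, Matrix.mul_one]
  rw [neg_mulVec, hA₁y, hy] at h₂
  simp only [add_mulVec, neg_mulVec, smul_mulVec] at h₂ ⊢
  linear_combination (norm := module) (-1 : R) • h₂

theorem strohMatrix_conjTranspose_mul (hA₀ : A₀.IsHermitian) (hA₂ : A₂.IsHermitian) :
    (strohMatrix A₀ A₁ A₂)ᴴ * fromBlocks 0 1 1 0 = fromBlocks 0 1 1 0 * strohMatrix A₀ A₁ A₂ := by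
  simp [strohMatrix, fromBlocks_conjTranspose, fromBlocks_multiply, conjTranspose_mul,
    hA₀.inv.eq, hA₂.eq, Matrix.mul_assoc]

theorem strohMatrix_charpoly_map_star (hA₀ : A₀.IsHermitian) (hA₂ : A₂.IsHermitian) :
    (strohMatrix A₀ A₁ A₂).charpoly.map (starRingEnd R) = (strohMatrix A₀ A₁ A₂).charpoly :=
  charpoly_map_star_of_conjTranspose_mul_eq isUnit_fromBlocks_zero_one_one_zero
    (strohMatrix_conjTranspose_mul hA₀ hA₂)

end CommRing

theorem strohMatrix_notMem_spectrum {K : Type*} [Field K] [StarRing K] {A₀ A₁ A₂ : Matrix n n K}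
    (hA₀ : IsUnit A₀) {s : K} (hs : IsUnit (s ^ 2 • A₀ + s • (A₁ + A₁ᴴ) + A₂)) :
    s ∉ spectrum K (strohMatrix A₀ A₁ A₂) := by
  rw [mem_spectrum_iff_isRoot_charpoly, IsRoot, eval_charpoly, ← exists_mulVec_eq_zero_iff]
  rintro ⟨v, hv, hsv⟩
  rw [sub_mulVec, sub_eq_zero, eq_comm, scalar_apply, ← smul_one_eq_diagonal, smul_mulVec,
    one_mulVec, ← Sum.elim_comp_inl_inr v] at hsv
  obtain ⟨hy, hx⟩ := strohMatrix_mulVec_eq_smul hA₀ hsv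
  have hx₀ : v ∘ Sum.inl = 0 := mulVec_injective_iff_isUnit.mpr hs (by rw [hx, mulVec_zero])
  rw [hx₀, mulVec_zero] at hy
  exact hv (by rw [← Sum.elim_comp_inl_inr v, hx₀, hy, Sum.elim_zero_zero])

end Matrix

/-- Equal dimension of spectral subspaces: if the self-adjoint quadratic matrix
polynomial `A(s)` with `A₀` positive definite is positive definite for every
real `s`, then its Stroh companion matrix `N` has no real eigenvalues and the
sums of generalized eigenspaces of `N` over the open upper and lower
half-planes each have dimension exactly `n`. -/
theorem stmt16 {n : ℕ} (A₀ A₁ A₂ : Matrix (Fin n) (Fin n) ℂ)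
    (hA₀ : A₀.PosDef) (hA₂ : A₂.IsHermitian)
    (A : ℂ → Matrix (Fin n) (Fin n) ℂ)
    (hA : ∀ s : ℂ, A s = s ^ 2 • A₀ + s • (A₁ + A₁ᴴ) + A₂)
    (hpos : ∀ t : ℝ, (A (t : ℂ)).PosDef)
    (N : Matrix (Fin n ⊕ Fin n) (Fin n ⊕ Fin n) ℂ)
    (hN : N = Matrix.fromBlocks (-(A₀⁻¹ * A₁)) A₀⁻¹
        (-A₂ + A₁ᴴ * A₀⁻¹ * A₁) (-(A₁ᴴ * A₀⁻¹)))
    (f : Module.End ℂ ((Fin n ⊕ Fin n) → ℂ)) (hf : f = Matrix.toLin' N)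
    (Yp Ym : Submodule ℂ ((Fin n ⊕ Fin n) → ℂ))
    (hYp : Yp = ⨆ μ ∈ {μ : ℂ | 0 < μ.im}, f.maxGenEigenspace μ)
    (hYm : Ym = ⨆ μ ∈ {μ : ℂ | μ.im < 0}, f.maxGenEigenspace μ) :
    (∀ t : ℝ, (t : ℂ) ∉ spectrum ℂ N) ∧
      Module.finrank ℂ Yp = n ∧ Module.finrank ℂ Ym = n := by
  replace hN : N = strohMatrix A₀ A₁ A₂ := hN
  subst hf hYp hYm
  have hspec (t : ℝ) : (t : ℂ) ∉ spectrum ℂ N :=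
    hN ▸ strohMatrix_notMem_spectrum hA₀.isUnit (hA t ▸ (hpos t).isUnit)
  have hsum := card_roots_filter_im_pos_add_im_neg fun t ↦
    mem_spectrum_iff_isRoot_charpoly.not.mp (hspec t)
  have hsymm := card_roots_filter_im_neg_eq_im_pos (p := N.charpoly) <| by
    rw [hN]
    exact strohMatrix_charpoly_map_star hA₀.1 hA₂
  have hdeg : N.charpoly.natDegree = n + n := by simp [charpoly_natDegree_eq_dim]
  refine ⟨hspec, ?_, ?_⟩ <;>
    rw [End.finrank_biSup_maxGenEigenspace, charpoly_toLin'] <;>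
    simp only [Set.mem_ofPred_eq] <;> omega
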